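/- arXiv:2211.00954 — 6 statements merged into one kernel-verified Lean document; each statement's English description precedes it below -/
import Mathlib

section
/- Let C be the middle-third Cantor set. Then {1/x₁ + 1/x₂ + 1/x₃ + 1/x₄ : x₁ ∈ C ∩ [8/27, 1/3], x₂, x₃, x₄ ∈ C ∩ [2/3, 1]} ⊇ [6, 63/8]. -/
/-!
Writing `x = a + ℓ t` with `t ∈ C` on the basic intervals `[8/27, 1/3]` and `[2/3, 1]` turns
each `1 / x` into a decreasing function of `t ∈ [0, 1]` whose difference quotients lie in
`[1/3, 3/4]`. Splitting a basic interval of length `ℓ` into its outer thirds leaves a gap of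
size at most `(3/4) (ℓ/3)` in the range of that coordinate, and since `3/4 ≤ 3 · (1/3)` this
gap is covered by the ranges of the other three coordinates. So the four coordinates can be
refined one after the other while a given `y ∈ [6, 63/8]` stays between the values of the sum at
the endpoints of the chosen basic intervals; the values at the left endpoints converge to `y`,
and the set of sums is compact.
-/

open Set Filter Topology
open scoped Pointwise

theorem div_three_mem_cantorSet {t : ℝ} (ht : t ∈ cantorSet) : t / 3 ∈ cantorSet :=
  cantorSet_eq_union_halves ▸ Or.inl ⟨t, ht, rfl⟩

theorem two_add_div_three_mem_cantorSet {t : ℝ} (ht : t ∈ cantorSet) :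
    (2 + t) / 3 ∈ cantorSet :=
  cantorSet_eq_union_halves ▸ Or.inr ⟨t, ht, rfl⟩

theorem one_mem_preCantorSet (n : ℕ) : (1 : ℝ) ∈ preCantorSet n := by
  induction n with
  | zero => simp
  | succ n ih => exact Or.inr ⟨1, ih, by norm_num⟩

theorem one_mem_cantorSet : (1 : ℝ) ∈ cantorSet :=
  mem_iInter.2 one_mem_preCantorSet

/-- For `ℓ = 3⁻ⁿ` these are the basic intervals `[a, a + ℓ]` of the `n`-th stage of the
construction of `C`. -/
def IsCantorCylinder (a ℓ : ℝ) : Prop :=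
  MapsTo (fun t => a + ℓ * t) cantorSet cantorSet

theorem isCantorCylinder_zero_one : IsCantorCylinder 0 1 := fun t ht => by simpa using ht

namespace IsCantorCylinder

variable {a ℓ : ℝ}

theorem mem_cantorSet (h : IsCantorCylinder a ℓ) : a ∈ cantorSet := by
  simpa using h zero_mem_cantorSet

theorem left_mem_Icc (h : IsCantorCylinder a ℓ) : a ∈ Icc (0 : ℝ) 1 :=
  cantorSet_subset_unitInterval h.mem_cantorSet

theorem right_mem_Icc (h : IsCantorCylinder a ℓ) : a + ℓ ∈ Icc (0 : ℝ) 1 := by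
  simpa using cantorSet_subset_unitInterval (h one_mem_cantorSet)

theorem first_third (h : IsCantorCylinder a ℓ) : IsCantorCylinder a (ℓ / 3) := fun t ht => by
  convert h (div_three_mem_cantorSet ht) using 1
  ring

theorem last_third (h : IsCantorCylinder a ℓ) : IsCantorCylinder (a + 2 * ℓ / 3) (ℓ / 3) :=
  fun t ht => by
    convert h (two_add_div_three_mem_cantorSet ht) using 1
    ring

theorem apply_mem (h : IsCantorCylinder a ℓ) (hℓ : 0 ≤ ℓ) {t : ℝ} (ht : t ∈ cantorSet) :
    a + ℓ * t ∈ cantorSet ∩ Icc a (a + ℓ) := by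
  obtain ⟨ht₀, ht₁⟩ := cantorSet_subset_unitInterval ht
  exact ⟨h ht, by nlinarith, by nlinarith⟩

end IsCantorCylinder

def DecreasesAtRate (m M : ℝ) (φ : ℝ → ℝ) : Prop :=
  ∀ ⦃s t : ℝ⦄, s ∈ Icc (0 : ℝ) 1 → t ∈ Icc (0 : ℝ) 1 → s ≤ t →
    m * (t - s) ≤ φ s - φ t ∧ φ s - φ t ≤ M * (t - s)

theorem decreasesAtRate_one_div_add_mul {a ℓ : ℝ} (ha : 0 < a) (hℓ : 0 ≤ ℓ) :
    DecreasesAtRate (ℓ / (a + ℓ) ^ 2) (ℓ / a ^ 2) (fun t => 1 / (a + ℓ * t)) := by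
  intro s t ⟨hs₀, hs₁⟩ ⟨ht₀, ht₁⟩ hst
  have hs : 0 < a + ℓ * s := by positivity
  have ht : 0 < a + ℓ * t := by positivity
  have hdiff : 1 / (a + ℓ * s) - 1 / (a + ℓ * t) = ℓ * (t - s) / ((a + ℓ * s) * (a + ℓ * t)) := by
    field_simp
    ring
  have hnum : 0 ≤ ℓ * (t - s) := mul_nonneg hℓ (by linarith)
  have hbounds : ∀ u, 0 ≤ u → u ≤ 1 → a ≤ a + ℓ * u ∧ a + ℓ * u ≤ a + ℓ := fun u hu₀ hu₁ =>
    ⟨by nlinarith, by nlinarith⟩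
  obtain ⟨hs_lo, hs_hi⟩ := hbounds s hs₀ hs₁
  obtain ⟨ht_lo, ht_hi⟩ := hbounds t ht₀ ht₁
  rw [hdiff]
  constructor
  · rw [div_mul_eq_mul_div]
    exact div_le_div_of_nonneg_left hnum (by positivity) (by rw [sq]; gcongr)
  · rw [div_mul_eq_mul_div]
    exact div_le_div_of_nonneg_left hnum (by positivity) (by rw [sq]; gcongr)

namespace DecreasesAtRate

variable {m M : ℝ} {φ : ℝ → ℝ}

theorem mono {m' M' : ℝ} (h : DecreasesAtRate m M φ) (hm : m' ≤ m) (hM : M ≤ M') :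
    DecreasesAtRate m' M' φ := fun s t hs ht hst => by
  obtain ⟨hlo, hhi⟩ := h hs ht hst
  constructor <;> nlinarith

theorem lipschitzOnWith (h : DecreasesAtRate m M φ) (hm : 0 ≤ m) :
    LipschitzOnWith (Real.toNNReal M) φ (Icc 0 1) := by
  refine LipschitzOnWith.of_dist_le' fun s hs t ht => ?_
  wlog hst : s ≤ t generalizing s t
  · rw [dist_comm, dist_comm s]
    exact this t ht s hs (le_of_not_ge hst)
  obtain ⟨hlo, hhi⟩ := h hs ht hst
  rw [Real.dist_eq, Real.dist_eq, abs_of_nonneg (by nlinarith), abs_of_nonpos (by linarith)]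
  linarith

theorem isCompact_image_cantorSet (h : DecreasesAtRate m M φ) (hm : 0 ≤ m) :
    IsCompact (φ '' cantorSet) :=
  isCompact_cantorSet.image_of_continuousOn
    ((h.lipschitzOnWith hm).continuousOn.mono cantorSet_subset_unitInterval)

variable {a ℓ : ℝ}

theorem sub_mem_Icc (h : DecreasesAtRate m M φ) (hc : IsCantorCylinder a ℓ) (hℓ : 0 ≤ ℓ) :
    φ a - φ (a + ℓ) ∈ Icc (m * ℓ) (M * ℓ) := by
  simpa using h hc.left_mem_Icc hc.right_mem_Icc (by linarith)

theorem exists_third_mem_Icc (h : DecreasesAtRate m M φ) (hc : IsCantorCylinder a ℓ)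
    (hℓ : 0 ≤ ℓ) {lo hi y : ℝ} (hgap : M * (ℓ / 3) ≤ hi - lo)
    (hy : y ∈ Icc (lo + φ (a + ℓ)) (hi + φ a)) :
    ∃ b, IsCantorCylinder b (ℓ / 3) ∧ y ∈ Icc (lo + φ (b + ℓ / 3)) (hi + φ b) := by
  by_cases hlast : y ≤ hi + φ (a + 2 * ℓ / 3)
  · refine ⟨a + 2 * ℓ / 3, hc.last_third, ?_, hlast⟩
    convert hy.1 using 3
    ring
  · have hmid := (h hc.first_third.right_mem_Icc hc.last_third.left_mem_Icc (by linarith)).2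
    exact ⟨a, hc.first_third, by linarith, hy.2⟩

end DecreasesAtRate

section FourCoordinates

variable {m M y : ℝ} {φ₁ φ₂ φ₃ φ₄ : ℝ → ℝ}

theorem exists_thirds_mem_Icc (hm : 0 ≤ m) (hM : M ≤ 3 * m) (h₁ : DecreasesAtRate m M φ₁)
    (h₂ : DecreasesAtRate m M φ₂) (h₃ : DecreasesAtRate m M φ₃) (h₄ : DecreasesAtRate m M φ₄)
    {ℓ a₁ a₂ a₃ a₄ : ℝ} (hℓ : 0 ≤ ℓ) (ha₁ : IsCantorCylinder a₁ ℓ) (ha₂ : IsCantorCylinder a₂ ℓ)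
    (ha₃ : IsCantorCylinder a₃ ℓ) (ha₄ : IsCantorCylinder a₄ ℓ)
    (hy : y ∈ Icc (φ₁ (a₁ + ℓ) + φ₂ (a₂ + ℓ) + φ₃ (a₃ + ℓ) + φ₄ (a₄ + ℓ))
      (φ₁ a₁ + φ₂ a₂ + φ₃ a₃ + φ₄ a₄)) :
    ∃ b₁ b₂ b₃ b₄, IsCantorCylinder b₁ (ℓ / 3) ∧ IsCantorCylinder b₂ (ℓ / 3) ∧
      IsCantorCylinder b₃ (ℓ / 3) ∧ IsCantorCylinder b₄ (ℓ / 3) ∧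
      y ∈ Icc (φ₁ (b₁ + ℓ / 3) + φ₂ (b₂ + ℓ / 3) + φ₃ (b₃ + ℓ / 3) + φ₄ (b₄ + ℓ / 3))
        (φ₁ b₁ + φ₂ b₂ + φ₃ b₃ + φ₄ b₄) := by
  have hℓ' : 0 ≤ ℓ / 3 := by positivity
  have hgap : M * (ℓ / 3) ≤ 3 * (m * (ℓ / 3)) := by nlinarith
  have hmℓ : m * (ℓ / 3) ≤ m * ℓ := by nlinarith
  have r₂ := (h₂.sub_mem_Icc ha₂ hℓ).1
  have r₃ := (h₃.sub_mem_Icc ha₃ hℓ).1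
  have r₄ := (h₄.sub_mem_Icc ha₄ hℓ).1
  obtain ⟨b₁, hb₁, hy₁⟩ := h₁.exists_third_mem_Icc ha₁ hℓ (y := y)
    (lo := φ₂ (a₂ + ℓ) + φ₃ (a₃ + ℓ) + φ₄ (a₄ + ℓ)) (hi := φ₂ a₂ + φ₃ a₃ + φ₄ a₄)
    (by linarith) (by constructor <;> linarith [hy.1, hy.2])
  have r₁ := (h₁.sub_mem_Icc hb₁ hℓ').1
  obtain ⟨b₂, hb₂, hy₂⟩ := h₂.exists_third_mem_Icc ha₂ hℓ (y := y)
    (lo := φ₁ (b₁ + ℓ / 3) + φ₃ (a₃ + ℓ) + φ₄ (a₄ + ℓ)) (hi := φ₁ b₁ + φ₃ a₃ + φ₄ a₄)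
    (by linarith) (by constructor <;> linarith [hy₁.1, hy₁.2])
  have r₂ := (h₂.sub_mem_Icc hb₂ hℓ').1
  obtain ⟨b₃, hb₃, hy₃⟩ := h₃.exists_third_mem_Icc ha₃ hℓ (y := y)
    (lo := φ₁ (b₁ + ℓ / 3) + φ₂ (b₂ + ℓ / 3) + φ₄ (a₄ + ℓ)) (hi := φ₁ b₁ + φ₂ b₂ + φ₄ a₄)
    (by linarith) (by constructor <;> linarith [hy₂.1, hy₂.2])
  have r₃ := (h₃.sub_mem_Icc hb₃ hℓ').1
  obtain ⟨b₄, hb₄, hy₄⟩ := h₄.exists_third_mem_Icc ha₄ hℓ (y := y)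
    (lo := φ₁ (b₁ + ℓ / 3) + φ₂ (b₂ + ℓ / 3) + φ₃ (b₃ + ℓ / 3)) (hi := φ₁ b₁ + φ₂ b₂ + φ₃ b₃)
    (by linarith) (by constructor <;> linarith [hy₃.1, hy₃.2])
  exact ⟨b₁, b₂, b₃, b₄, hb₁, hb₂, hb₃, hb₄, by linarith [hy₄.1], by linarith [hy₄.2]⟩

theorem exists_cylinders_mem_Icc (hm : 0 ≤ m) (hM : M ≤ 3 * m) (h₁ : DecreasesAtRate m M φ₁)
    (h₂ : DecreasesAtRate m M φ₂) (h₃ : DecreasesAtRate m M φ₃) (h₄ : DecreasesAtRate m M φ₄)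
    (hy : y ∈ Icc (φ₁ 1 + φ₂ 1 + φ₃ 1 + φ₄ 1) (φ₁ 0 + φ₂ 0 + φ₃ 0 + φ₄ 0)) (n : ℕ) :
    ∃ a₁ a₂ a₃ a₄, IsCantorCylinder a₁ ((1 / 3) ^ n) ∧ IsCantorCylinder a₂ ((1 / 3) ^ n) ∧
      IsCantorCylinder a₃ ((1 / 3) ^ n) ∧ IsCantorCylinder a₄ ((1 / 3) ^ n) ∧
      y ∈ Icc (φ₁ (a₁ + (1 / 3) ^ n) + φ₂ (a₂ + (1 / 3) ^ n) + φ₃ (a₃ + (1 / 3) ^ n)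
          + φ₄ (a₄ + (1 / 3) ^ n))
        (φ₁ a₁ + φ₂ a₂ + φ₃ a₃ + φ₄ a₄) := by
  induction n with
  | zero =>
    have h := isCantorCylinder_zero_one
    exact ⟨0, 0, 0, 0, h, h, h, h, by simpa using hy⟩
  | succ n ih =>
    obtain ⟨a₁, a₂, a₃, a₄, ha₁, ha₂, ha₃, ha₄, hy'⟩ := ih
    rw [pow_succ, mul_one_div]
    exact exists_thirds_mem_Icc hm hM h₁ h₂ h₃ h₄ (by positivity) ha₁ ha₂ ha₃ ha₄ hy'

theorem Icc_subset_add_images_cantorSet (hm : 0 ≤ m) (hM : M ≤ 3 * m)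
    (h₁ : DecreasesAtRate m M φ₁) (h₂ : DecreasesAtRate m M φ₂) (h₃ : DecreasesAtRate m M φ₃)
    (h₄ : DecreasesAtRate m M φ₄) :
    Icc (φ₁ 1 + φ₂ 1 + φ₃ 1 + φ₄ 1) (φ₁ 0 + φ₂ 0 + φ₃ 0 + φ₄ 0) ⊆
      φ₁ '' cantorSet + φ₂ '' cantorSet + φ₃ '' cantorSet + φ₄ '' cantorSet := by
  intro y hy
  have hK := (((h₁.isCompact_image_cantorSet hm).add (h₂.isCompact_image_cantorSet hm)).add
    (h₃.isCompact_image_cantorSet hm)).add (h₄.isCompact_image_cantorSet hm)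
  rw [← hK.isClosed.closure_eq]
  choose a₁ a₂ a₃ a₄ ha₁ ha₂ ha₃ ha₄ hy' using exists_cylinders_mem_Icc hm hM h₁ h₂ h₃ h₄ hy
  have hclose : ∀ n, φ₁ (a₁ n) + φ₂ (a₂ n) + φ₃ (a₃ n) + φ₄ (a₄ n) ≤ y + 4 * M * (1 / 3) ^ n :=
    fun n => by
      have hℓ : (0 : ℝ) ≤ (1 / 3) ^ n := by positivity
      linarith [(h₁.sub_mem_Icc (ha₁ n) hℓ).2, (h₂.sub_mem_Icc (ha₂ n) hℓ).2,
        (h₃.sub_mem_Icc (ha₃ n) hℓ).2, (h₄.sub_mem_Icc (ha₄ n) hℓ).2, (hy' n).1]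
  have hlim : Tendsto (fun n : ℕ => y + 4 * M * (1 / 3 : ℝ) ^ n) atTop (𝓝 y) := by
    simpa using (tendsto_pow_atTop_nhds_zero_of_lt_one (by norm_num : (0 : ℝ) ≤ 1 / 3)
      (by norm_num)).const_mul (4 * M) |>.const_add y
  refine mem_closure_of_tendsto
    (tendsto_of_tendsto_of_tendsto_of_le_of_le tendsto_const_nhds hlim (fun n => (hy' n).2) hclose)
    (Eventually.of_forall fun n => ?_)
  exact add_mem_add (add_mem_add (add_mem_add (mem_image_of_mem _ (ha₁ n).mem_cantorSet)
    (mem_image_of_mem _ (ha₂ n).mem_cantorSet)) (mem_image_of_mem _ (ha₃ n).mem_cantorSet))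
    (mem_image_of_mem _ (ha₄ n).mem_cantorSet)

end FourCoordinates

theorem four_reciprocals_cantorSet_supset_Icc_six :
    Set.Icc (6 : ℝ) (63 / 8) ⊆
      {y : ℝ | ∃ x₁ ∈ cantorSet ∩ Set.Icc (8 / 27 : ℝ) (1 / 3),
        ∃ x₂ ∈ cantorSet ∩ Set.Icc (2 / 3 : ℝ) 1,
        ∃ x₃ ∈ cantorSet ∩ Set.Icc (2 / 3 : ℝ) 1,
        ∃ x₄ ∈ cantorSet ∩ Set.Icc (2 / 3 : ℝ) 1,
        y = 1 / x₁ + 1 / x₂ + 1 / x₃ + 1 / x₄} := by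
  intro y hy
  have hc₁ : IsCantorCylinder (8 / 27) (1 / 27) := by
    convert isCantorCylinder_zero_one.first_third.last_third.last_third using 1 <;> norm_num
  have hc₂ : IsCantorCylinder (2 / 3) (1 / 3) := by
    convert isCantorCylinder_zero_one.last_third using 1
    norm_num
  have hφ₁ : DecreasesAtRate (1 / 3) (3 / 4) fun t => 1 / (8 / 27 + 1 / 27 * t) :=
    (decreasesAtRate_one_div_add_mul (by norm_num) (by norm_num)).mono (by norm_num) (by norm_num)
  have hφ₂ : DecreasesAtRate (1 / 3) (3 / 4) fun t => 1 / (2 / 3 + 1 / 3 * t) :=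
    (decreasesAtRate_one_div_add_mul (by norm_num) (by norm_num)).mono (by norm_num) (by norm_num)
  obtain ⟨_, ⟨_, ⟨_, ⟨t₁, ht₁, rfl⟩, _, ⟨t₂, ht₂, rfl⟩, rfl⟩, _, ⟨t₃, ht₃, rfl⟩, rfl⟩,
      _, ⟨t₄, ht₄, rfl⟩, hsum⟩ :=
    Icc_subset_add_images_cantorSet (by norm_num) (by norm_num) hφ₁ hφ₂ hφ₂ hφ₂
      (by convert hy using 1; norm_num)
  have h₁ := hc₁.apply_mem (by norm_num) ht₁
  have h₂ := hc₂.apply_mem (by norm_num) ht₂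
  have h₃ := hc₂.apply_mem (by norm_num) ht₃
  have h₄ := hc₂.apply_mem (by norm_num) ht₄
  norm_num only at h₁ h₂ h₃ h₄
  exact ⟨_, h₁, _, h₂, _, h₃, _, h₄, hsum.symm⟩
end

section
/- Let λ be a real number with 1/3 ≤ λ < (3 − √5)/2 and let K be the attractor of the IFS {x ↦ λx, x ↦ λx + (1−λ)}. Then K/K = ⋃_{k ∈ ℤ} [λ^k(1−λ), λ^k(1−λ)^{-1}] ∪ {0}, i.e., a nonzero real t belongs to K/K if and only if λ^k(1−λ) ≤ t ≤ λ^k(1−λ)^{-1} for some integer k, and 0 ∈ K/K. -/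
/-!
Every nonzero point of `K` is `lⁿ y` with `y ∈ K ∩ [1 - l, 1]`, because `K` misses the gap
`(l, 1 - l)`; hence a nonzero quotient is `lᵏ (v / y)` with `v / y ∈ [1 - l, (1 - l)⁻¹]`.

Conversely, for `t ∈ [1 - l, 1]` the difference set `K - tK` contains `[-t, 1]`: the four maps
`c ↦ l c + b - t a` with `a, b ∈ {0, 1 - l}` preserve `K - tK`, and when `l ≥ 1/3` their images
of `[-t, 1]` cover `[-t, 1]`, so the distance to `K - tK` at its maximum on `[-t, 1]` is at most
`l` times itself and vanishes. A suitable point of `[-t, 1]` yields `x ≠ 0` in `K` with `t x ∈ K`.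
Inversion and multiplication by powers of `l` preserve `K/K`, which gives the rest.
-/

open Set Metric

section Contraction

variable {X : Type*} [PseudoMetricSpace X]

theorem LipschitzWith.infDist_le_mul_of_mapsTo {f : X → X} {K : NNReal} (hf : LipschitzWith K f)
    {S : Set X} (hS : MapsTo f S S) (x : X) : infDist (f x) S ≤ K * infDist x S := by
  rcases S.eq_empty_or_nonempty with rfl | hne
  · simp
  have := hne.to_subtype
  calc infDist (f x) S ≤ ⨅ y : S, K * dist x y :=
        le_ciInf fun y => (infDist_le_dist_of_mem (hS y.2)).trans (hf.dist_le_mul x y)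
    _ = K * infDist x S := by rw [infDist_eq_iInf]; exact (Real.mul_iInf_of_nonneg K.2 _).symm

/-- At a point of `I` where the distance to `S` is maximal, covering by contractions forces
that distance to be at most `K` times itself. -/
theorem subset_of_subset_iUnion_image {ι : Type*} {f : ι → X → X} {K : NNReal} (hK : K < 1)
    (hf : ∀ i, LipschitzWith K (f i)) {S I : Set X} (hS : ∀ i, MapsTo (f i) S S)
    (hSc : IsClosed S) (hSne : S.Nonempty) (hI : IsCompact I) (hcov : I ⊆ ⋃ i, f i '' I) :
    I ⊆ S := by
  rcases I.eq_empty_or_nonempty with rfl | hIne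
  · exact empty_subset S
  obtain ⟨x₀, hx₀, hmax⟩ := hI.exists_isMaxOn hIne (continuous_infDist_pt S).continuousOn
  have hx₀S : infDist x₀ S ≤ 0 := by
    obtain ⟨i, y, hy, rfl⟩ := mem_iUnion.1 (hcov hx₀)
    have hK' : (K : ℝ) < 1 := hK
    nlinarith [(hf i).infDist_le_mul_of_mapsTo (hS i) y, isMaxOn_iff.1 hmax y hy,
      infDist_nonneg (x := y) (s := S), K.2]
  intro x hx
  rw [hSc.mem_iff_infDist_zero hSne]
  exact le_antisymm ((isMaxOn_iff.1 hmax x hx).trans hx₀S) infDist_nonneg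

end Contraction

section QuotientSet

variable {F : Type*} [Field F] {K : Set F} {a w : F}

/-- Unlike the pointwise `K / K`, the denominators range over `K \ {0}` only (`z / 0 = 0`). -/
def quotientSet (K : Set F) : Set F := {w | ∃ z ∈ K, ∃ x ∈ K, x ≠ 0 ∧ w = z / x}

theorem mul_mem_quotientSet (ha : ∀ x ∈ K, a * x ∈ K) (hw : w ∈ quotientSet K) :
    a * w ∈ quotientSet K := by
  obtain ⟨z, hz, x, hx, hx0, rfl⟩ := hw
  exact ⟨a * z, ha z hz, x, hx, hx0, (mul_div_assoc a z x).symm⟩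

theorem div_mem_quotientSet (ha0 : a ≠ 0) (ha : ∀ x ∈ K, a * x ∈ K)
    (hw : w ∈ quotientSet K) : w / a ∈ quotientSet K := by
  obtain ⟨z, hz, x, hx, hx0, rfl⟩ := hw
  exact ⟨z, hz, a * x, ha x hx, mul_ne_zero ha0 hx0, (div_mul_eq_div_div_swap z a x).symm⟩

theorem zpow_mul_mem_quotientSet (ha0 : a ≠ 0) (ha : ∀ x ∈ K, a * x ∈ K)
    (hw : w ∈ quotientSet K) (k : ℤ) : a ^ k * w ∈ quotientSet K := by
  induction k using Int.induction_on with
  | zero => simpa using hw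
  | succ k ih =>
    rw [zpow_add_one₀ ha0, mul_comm _ a, mul_assoc]
    exact mul_mem_quotientSet ha ih
  | pred k ih =>
    rw [zpow_sub_one₀ ha0, mul_right_comm, ← div_eq_mul_inv]
    exact div_mem_quotientSet ha0 ha ih

theorem inv_mem_quotientSet (hw0 : w ≠ 0) (hw : w ∈ quotientSet K) :
    w⁻¹ ∈ quotientSet K := by
  obtain ⟨z, hz, x, hx, -, rfl⟩ := hw
  exact ⟨x, hx, z, hz, (div_ne_zero_iff.1 hw0).1, inv_div z x⟩

end QuotientSet

structure IsCentralCantorSet (l : ℝ) (K : Set ℝ) : Prop where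
  isCompact : IsCompact K
  nonempty : K.Nonempty
  eq_union : K = (fun x => l * x) '' K ∪ (fun x => l * x + (1 - l)) '' K

namespace IsCentralCantorSet

variable {l : ℝ} {K : Set ℝ}

theorem mul_mem (hK : IsCentralCantorSet l K) {x : ℝ} (hx : x ∈ K) : l * x ∈ K := by
  rw [hK.eq_union]; exact Or.inl ⟨x, hx, rfl⟩

theorem mul_add_mem (hK : IsCentralCantorSet l K) {x : ℝ} (hx : x ∈ K) :
    l * x + (1 - l) ∈ K := by
  rw [hK.eq_union]; exact Or.inr ⟨x, hx, rfl⟩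

theorem mul_add_cond_mem (hK : IsCentralCantorSet l K) {x : ℝ} (hx : x ∈ K) (b : Bool) :
    l * x + cond b (1 - l) 0 ∈ K := by
  cases b
  · simpa using hK.mul_mem hx
  · exact hK.mul_add_mem hx

theorem exists_eq_mul_add (hK : IsCentralCantorSet l K) {x : ℝ} (hx : x ∈ K) :
    ∃ y ∈ K, x = l * y ∨ x = l * y + (1 - l) := by
  rw [hK.eq_union] at hx
  rcases hx with ⟨y, hy, rfl⟩ | ⟨y, hy, rfl⟩
  exacts [⟨y, hy, Or.inl rfl⟩, ⟨y, hy, Or.inr rfl⟩]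

theorem isLeast_zero (hK : IsCentralCantorSet l K) (hl0 : 0 < l) (hl1 : l < 1) : IsLeast K 0 := by
  have hbdd := hK.isCompact.bddBelow
  have hmem := hK.isCompact.sInf_mem hK.nonempty
  have hle : sInf K ≤ l * sInf K := csInf_le hbdd (hK.mul_mem hmem)
  have hge : l * sInf K ≤ sInf K := by
    obtain ⟨y, hy, h | h⟩ := hK.exists_eq_mul_add hmem <;>
      nlinarith [csInf_le hbdd hy]
  have h0 : sInf K = 0 := by nlinarith
  exact ⟨h0 ▸ hmem, fun x hx => h0 ▸ csInf_le hbdd hx⟩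

theorem isGreatest_one (hK : IsCentralCantorSet l K) (hl0 : 0 < l) (hl1 : l < 1) :
    IsGreatest K 1 := by
  have hbdd := hK.isCompact.bddAbove
  have hmem := hK.isCompact.sSup_mem hK.nonempty
  have hge : l * sSup K + (1 - l) ≤ sSup K := le_csSup hbdd (hK.mul_add_mem hmem)
  have hle : sSup K ≤ l * sSup K + (1 - l) := by
    obtain ⟨y, hy, h | h⟩ := hK.exists_eq_mul_add hmem <;>
      nlinarith [le_csSup hbdd hy]
  have h1 : sSup K = 1 := by nlinarith
  exact ⟨h1 ▸ hmem, fun x hx => h1 ▸ le_csSup hbdd hx⟩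

theorem subset_Icc (hK : IsCentralCantorSet l K) (hl0 : 0 < l) (hl1 : l < 1) : K ⊆ Icc 0 1 :=
  fun _ hx => ⟨(hK.isLeast_zero hl0 hl1).2 hx, (hK.isGreatest_one hl0 hl1).2 hx⟩

/-- `K` misses the gap `(l, 1 - l)`, so a point below `1 - l` lies in the left copy `l • K`. -/
theorem exists_eq_pow_mul (hK : IsCentralCantorSet l K) (hl0 : 0 < l) (hl1 : l < 1) {x : ℝ}
    (hx : x ∈ K) (hx0 : x ≠ 0) : ∃ n : ℕ, ∃ y ∈ K, 1 - l ≤ y ∧ x = l ^ n * y := by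
  suffices h : ∀ n : ℕ, ∀ x ∈ K, l ^ n * (1 - l) ≤ x →
      ∃ m : ℕ, ∃ y ∈ K, 1 - l ≤ y ∧ x = l ^ m * y by
    have hxpos : 0 < x := lt_of_le_of_ne ((hK.subset_Icc hl0 hl1 hx).1) (Ne.symm hx0)
    obtain ⟨n, hn⟩ := exists_pow_lt_of_lt_one hxpos hl1
    exact h n x hx (by nlinarith [pow_pos hl0 n])
  intro n
  induction n with
  | zero => exact fun x hx h => ⟨0, x, hx, by simpa using h, by simp⟩
  | succ n ih =>
    intro x hx hlow
    by_cases hx1 : 1 - l ≤ x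
    · exact ⟨0, x, hx, hx1, by simp⟩
    obtain ⟨y, hy, rfl | rfl⟩ := hK.exists_eq_mul_add hx
    · have hy' : l ^ n * (1 - l) ≤ y := by
        rw [pow_succ] at hlow; nlinarith
      obtain ⟨m, z, hz, hz1, rfl⟩ := ih y hy hy'
      exact ⟨m + 1, z, hz, hz1, by ring⟩
    · nlinarith [(hK.subset_Icc hl0 hl1 hy).1]

/-- The four maps `c ↦ l c + b - t a`, `a, b ∈ {0, 1 - l}`, send `K - tK` into itself, and for
`l ≥ 1/3` their images of `[-t, 1]` cover `[-t, 1]`. -/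
theorem Icc_subset_image_sub_mul (hK : IsCentralCantorSet l K) (hl1 : 1 / 3 ≤ l) (hl : l < 1 / 2)
    {t : ℝ} (ht : t ∈ Icc (1 - l) 1) :
    Icc (-t) 1 ⊆ (fun p : ℝ × ℝ => p.2 - t * p.1) '' K ×ˢ K := by
  have hl0 : 0 < l := by linarith
  obtain ⟨ht1, ht2⟩ := ht
  let f : Bool × Bool → ℝ → ℝ := fun i c =>
    l * c + (cond i.2 (1 - l) 0 - t * cond i.1 (1 - l) 0)
  refine subset_of_subset_iUnion_image (f := f) (K := l.toNNReal) ?_ (fun i => ?_) (fun i => ?_)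
    ((hK.isCompact.prod hK.isCompact).image (by fun_prop)).isClosed
    ((hK.nonempty.prod hK.nonempty).image _) isCompact_Icc ?_
  · simpa using hl.trans one_half_lt_one
  · refine LipschitzWith.of_dist_le_mul fun x y => ?_
    simp only [f, Real.dist_eq, Real.coe_toNNReal l hl0.le, add_sub_add_right_eq_sub, ← mul_sub,
      abs_mul, abs_of_pos hl0, le_refl]
  · rintro _ ⟨⟨x, y⟩, ⟨hx, hy⟩, rfl⟩
    refine ⟨(l * x + cond i.1 (1 - l) 0, l * y + cond i.2 (1 - l) 0),
      ⟨hK.mul_add_cond_mem hx _, hK.mul_add_cond_mem hy _⟩, ?_⟩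
    simp only [f]; ring
  · intro c hc
    simp only [f, mem_iUnion, image_affine_Icc' hl0, Prod.exists, mem_Icc] at hc ⊢
    obtain ⟨hc1, hc2⟩ := hc
    rcases lt_or_ge c (-(l * t)) with h1 | h1
    · exact ⟨true, false, by simp only [cond_true, cond_false]; constructor <;> nlinarith⟩
    rcases le_or_gt c l with h2 | h2
    · exact ⟨false, false, by simp only [cond_false]; constructor <;> nlinarith⟩
    rcases le_or_gt c ((1 - t) * (1 - l) + l) with h3 | h3
    · exact ⟨true, true, by simp only [cond_true]; constructor <;> nlinarith⟩
    · exact ⟨false, true, by simp only [cond_true, cond_false]; constructor <;> nlinarith⟩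

/-- `(t - 1)(1 - l)/l = y - t x` rearranges to `t (l x + 1 - l) = l y + 1 - l`. -/
theorem exists_ne_zero_mul_mem (hK : IsCentralCantorSet l K) (hl1 : 1 / 3 ≤ l) (hl : l < 1 / 2)
    {t : ℝ} (ht : t ∈ Icc (1 - l) 1) : ∃ x ∈ K, x ≠ 0 ∧ t * x ∈ K := by
  have hl0 : 0 < l := by linarith
  have hc : (t - 1) * (1 - l) / l ∈ Icc (-t) 1 := by
    constructor
    · rw [le_div_iff₀ hl0]; nlinarith [ht.1]
    · rw [div_le_one hl0]; nlinarith [ht.2]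
  obtain ⟨⟨x, y⟩, ⟨hx, hy⟩, hxy⟩ := hK.Icc_subset_image_sub_mul hl1 hl ht hc
  refine ⟨l * x + (1 - l), hK.mul_add_mem hx, ?_, ?_⟩
  · nlinarith [(hK.subset_Icc hl0 (by linarith) hx).1]
  · convert hK.mul_add_mem hy using 1
    field_simp at hxy
    linarith

theorem Icc_subset_quotientSet (hK : IsCentralCantorSet l K) (hl1 : 1 / 3 ≤ l) (hl : l < 1 / 2) :
    Icc (1 - l) (1 - l)⁻¹ ⊆ quotientSet K := by
  have hsmall : ∀ s ∈ Icc (1 - l) 1, s ∈ quotientSet K := fun s hs => by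
    obtain ⟨x, hx, hx0, hsx⟩ := hK.exists_ne_zero_mul_mem hl1 hl hs
    exact ⟨s * x, hsx, x, hx, hx0, (mul_div_cancel_right₀ s hx0).symm⟩
  rintro s ⟨hs1, hs2⟩
  rcases le_or_gt s 1 with hs | hs
  · exact hsmall s ⟨hs1, hs⟩
  have hs0 : 0 < s := zero_lt_one.trans hs
  have hsinv : s⁻¹ ∈ Icc (1 - l) 1 :=
    ⟨by simpa using inv_anti₀ hs0 hs2, inv_le_one_of_one_le₀ hs.le⟩
  simpa using inv_mem_quotientSet (inv_ne_zero hs0.ne') (hsmall _ hsinv)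

theorem exists_zpow_bounds_of_mem_quotientSet (hK : IsCentralCantorSet l K) (hl0 : 0 < l)
    (hl1 : l < 1) {w : ℝ} (hw : w ∈ quotientSet K) (hw0 : w ≠ 0) :
    ∃ k : ℤ, l ^ k * (1 - l) ≤ w ∧ w ≤ l ^ k * (1 - l)⁻¹ := by
  obtain ⟨z, hz, x, hx, hx0, rfl⟩ := hw
  obtain ⟨m, v, hv, hv1, rfl⟩ := hK.exists_eq_pow_mul hl0 hl1 hz (div_ne_zero_iff.1 hw0).1
  obtain ⟨n, y, hy, hy1, rfl⟩ := hK.exists_eq_pow_mul hl0 hl1 hx hx0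
  have hvle := (hK.subset_Icc hl0 hl1 hv).2
  have hyle := (hK.subset_Icc hl0 hl1 hy).2
  have hy0 : 0 < y := by linarith
  have hquot : l ^ m * v / (l ^ n * y) = l ^ ((m : ℤ) - n) * (v / y) := by
    rw [zpow_sub₀ hl0.ne', zpow_natCast, zpow_natCast, mul_div_mul_comm]
  rw [hquot]
  refine ⟨m - n, mul_le_mul_of_nonneg_left ?_ (zpow_pos hl0 _).le,
    mul_le_mul_of_nonneg_left ?_ (zpow_pos hl0 _).le⟩
  · rw [le_div_iff₀ hy0]; nlinarith
  · rw [div_le_iff₀ hy0, ← div_eq_inv_mul, le_div_iff₀ (by linarith)]; nlinarith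

end IsCentralCantorSet

theorem quotient_set_of_self_similar_set_general
    (l : ℝ) (hl : l < 1 / 2)
    (hl1 : 1 / 3 ≤ l)
    (K : Set ℝ) (hKne : K.Nonempty) (hKc : IsCompact K)
    (hK : K = (fun x => l * x) '' K ∪ (fun x => l * x + (1 - l)) '' K) :
    (∀ t : ℝ, t ≠ 0 →
      (t ∈ {w : ℝ | ∃ z ∈ K, ∃ x ∈ K, x ≠ 0 ∧ w = z / x} ↔
        ∃ k : ℤ, l ^ k * (1 - l) ≤ t ∧ t ≤ l ^ k * (1 - l)⁻¹)) ∧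
    (0 : ℝ) ∈ {w : ℝ | ∃ z ∈ K, ∃ x ∈ K, x ≠ 0 ∧ w = z / x} := by
  have hC : IsCentralCantorSet l K := ⟨hKc, hKne, hK⟩
  have hl0 : 0 < l := by linarith
  have hl_lt_one : l < 1 := by linarith
  refine ⟨fun t ht => ⟨fun htK => ?_, fun ⟨k, hk1, hk2⟩ => ?_⟩, ?_⟩
  · exact hC.exists_zpow_bounds_of_mem_quotientSet hl0 hl_lt_one htK ht
  · have hlk : 0 < l ^ k := zpow_pos hl0 k
    have hs : t / l ^ k ∈ Icc (1 - l) (1 - l)⁻¹ :=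
      ⟨(le_div_iff₀' hlk).2 hk1, (div_le_iff₀' hlk).2 hk2⟩
    have h := zpow_mul_mem_quotientSet hl0.ne' (fun _ => hC.mul_mem)
      (hC.Icc_subset_quotientSet hl1 hl hs) k
    rwa [mul_div_cancel₀ t hlk.ne'] at h
  · exact ⟨0, (hC.isLeast_zero hl0 hl_lt_one).1, 1, (hC.isGreatest_one hl0 hl_lt_one).1,
      one_ne_zero, (zero_div 1).symm⟩

/-- The quotient set `K/K` for the attractor of `{λx, λx + (1-λ)}` with
`1/3 ≤ λ < (3-√5)/2` is `⋃_{k ∈ ℤ} [λᵏ(1-λ), λᵏ(1-λ)⁻¹] ∪ {0}`. -/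
theorem quotient_set_of_self_similar_set
    (l : ℝ) (hl0 : 0 < l) (hl : l < 1 / 2)
    (hl1 : 1 / 3 ≤ l) (hl2 : l < (3 - Real.sqrt 5) / 2)
    (K : Set ℝ) (hKne : K.Nonempty) (hKc : IsCompact K)
    (hK : K = (fun x => l * x) '' K ∪ (fun x => l * x + (1 - l)) '' K) :
    (∀ t : ℝ, t ≠ 0 →
      (t ∈ {w : ℝ | ∃ z ∈ K, ∃ x ∈ K, x ≠ 0 ∧ w = z / x} ↔
        ∃ k : ℤ, l ^ k * (1 - l) ≤ t ∧ t ≤ l ^ k * (1 - l)⁻¹)) ∧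
    (0 : ℝ) ∈ {w : ℝ | ∃ z ∈ K, ∃ x ∈ K, x ≠ 0 ∧ w = z / x} :=
  quotient_set_of_self_similar_set_general l hl hl1 K hKne hKc hK
end

section
/- Let λ be a real number with 1/3 ≤ λ < (3 − √5)/2, let K be the attractor of the IFS {x ↦ λx, x ↦ λx + (1−λ)}, and let n ≥ 2 be an integer. If x, y, z ∈ K ∩ (0,1) satisfy x^n + y^n = z^n, then, writing α = max(x,y)/min(x,y) − 1 (so α ≥ 0), there exists an integer k such that λ^{kn}(1−λ)^n ≤ 1 + (1+α)^n ≤ λ^{kn}(1−λ)^{−n}. -/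
/-!
Every point `u ∈ K ∩ (0, 1]` can be written as `λ^j s` with `s ∈ [1 - λ, 1]`: peel off left
branches `x ↦ λx` until the point lies in the right piece `λK + (1 - λ) ⊆ [1 - λ, 1]`.
Dividing `x^n + y^n = z^n` by `min(x, y)^n` gives `1 + (1 + α)^n = (z / min(x, y))^n`,
and writing `z = λ^j t`, `min(x, y) = λ^i s` pins `z / min(x, y)` between
`λ^(j-i) (1 - λ)` and `λ^(j-i) (1 - λ)⁻¹`.
-/

open Set

section SelfSimilar

variable {l : ℝ} {K : Set ℝ}

theorem subset_Icc_of_subset_image_union (hl0 : 0 ≤ l) (hl1 : l < 1) (hKc : IsCompact K)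
    (hK : K ⊆ (fun x => l * x) '' K ∪ (fun x => l * x + (1 - l)) '' K) :
    K ⊆ Icc 0 1 := by
  rcases K.eq_empty_or_nonempty with rfl | hKne
  · exact empty_subset _
  have hsup_le : sSup K ≤ 1 := by
    rcases hK (hKc.sSup_mem hKne) with ⟨v, hv, hveq⟩ | ⟨v, hv, hveq⟩ <;>
      nlinarith [le_csSup hKc.bddAbove hv]
  have hinf_ge : 0 ≤ sInf K := by
    rcases hK (hKc.sInf_mem hKne) with ⟨v, hv, hveq⟩ | ⟨v, hv, hveq⟩ <;>
      nlinarith [csInf_le hKc.bddBelow hv]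
  exact fun u hu =>
    ⟨hinf_ge.trans (csInf_le hKc.bddBelow hu), (le_csSup hKc.bddAbove hu).trans hsup_le⟩

theorem exists_eq_pow_mul_of_mem (hl0 : 0 < l) (hl1 : l < 1) (hK01 : K ⊆ Icc 0 1)
    (hK : K ⊆ (fun x => l * x) '' K ∪ (fun x => l * x + (1 - l)) '' K)
    {u : ℝ} (hu : u ∈ K) (hu0 : 0 < u) :
    ∃ j : ℕ, ∃ s ∈ Icc (1 - l) 1, u = l ^ j * s := by
  obtain ⟨N, hN⟩ := exists_pow_lt_of_lt_one hu0 hl1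
  induction N generalizing u with
  | zero => exact absurd (hK01 hu).2 (by simpa using hN)
  | succ N ih =>
    rcases hK hu with ⟨v, hv, rfl⟩ | ⟨v, hv, rfl⟩
    · have hvN : l ^ N < v := lt_of_mul_lt_mul_left (by rwa [← pow_succ']) hl0.le
      obtain ⟨j, s, hs, rfl⟩ := ih hv ((pow_pos hl0 N).trans hvN) hvN
      exact ⟨j + 1, s, hs, by ring⟩
    · refine ⟨0, _, ⟨?_, (hK01 hu).2⟩, (one_mul _).symm⟩
      nlinarith [(hK01 hv).1]

end SelfSimilar

theorem div_mem_Icc_of_eq_pow_mul {l c a b s t : ℝ} (hl0 : 0 < l) (hc : 0 < c)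
    (hs : s ∈ Icc c 1) (ht : t ∈ Icc c 1) {i j : ℕ} (ha : a = l ^ i * s) (hb : b = l ^ j * t) :
    b / a ∈ Icc (l ^ ((j : ℤ) - i) * c) (l ^ ((j : ℤ) - i) * c⁻¹) := by
  have hs0 : 0 < s := hc.trans_le hs.1
  have hba : b / a = l ^ ((j : ℤ) - i) * (t / s) := by
    rw [ha, hb, zpow_sub₀ hl0.ne', zpow_natCast, zpow_natCast]
    field_simp
  have hts : t / s ∈ Icc c c⁻¹ := by
    constructor
    · rw [le_div_iff₀ hs0]; nlinarith [hs.2, ht.1]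
    · rw [div_le_iff₀ hs0, inv_mul_eq_div, le_div_iff₀ hc]; nlinarith [hs.1, ht.2]
  rw [hba]
  have hq : 0 ≤ l ^ ((j : ℤ) - i) := (zpow_pos hl0 _).le
  exact ⟨mul_le_mul_of_nonneg_left hts.1 hq, mul_le_mul_of_nonneg_left hts.2 hq⟩

theorem pow_mem_Icc_zpow_mul {l c w : ℝ} {k : ℤ} (hl0 : 0 < l) (hc : 0 < c)
    (hw : w ∈ Icc (l ^ k * c) (l ^ k * c⁻¹)) (n : ℕ) :
    l ^ (k * (n : ℤ)) * c ^ (n : ℤ) ≤ w ^ n ∧ w ^ n ≤ l ^ (k * (n : ℤ)) * c ^ (-(n : ℤ)) := by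
  have hlow : 0 ≤ l ^ k * c := by positivity
  constructor
  · calc l ^ (k * (n : ℤ)) * c ^ (n : ℤ) = (l ^ k * c) ^ n := by
          rw [zpow_mul, zpow_natCast, zpow_natCast, mul_pow]
      _ ≤ w ^ n := pow_le_pow_left₀ hlow hw.1 n
  · calc w ^ n ≤ (l ^ k * c⁻¹) ^ n := pow_le_pow_left₀ (hlow.trans hw.1) hw.2 n
      _ = l ^ (k * (n : ℤ)) * c ^ (-(n : ℤ)) := by
          rw [zpow_mul, zpow_natCast, mul_pow, zpow_neg, zpow_natCast, inv_pow]

theorem one_add_div_pow_eq_div_pow {m M z : ℝ} {n : ℕ} (hm : m ≠ 0) (h : m ^ n + M ^ n = z ^ n) :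
    1 + (M / m) ^ n = (z / m) ^ n := by
  rw [div_pow, div_pow, ← h]
  field_simp

theorem min_pow_add_max_pow {x y : ℝ} (n : ℕ) : min x y ^ n + max x y ^ n = x ^ n + y ^ n := by
  rcases le_total x y with h | h
  · rw [min_eq_left h, max_eq_right h]
  · rw [min_eq_right h, max_eq_left h, add_comm]

theorem fermat_equation_solutions_on_self_similar_set_general
    (l : ℝ) (hl0 : 0 < l) (hl : l < 1 / 2)
    (K : Set ℝ) (hKc : IsCompact K)
    (hK : K = (fun x => l * x) '' K ∪ (fun x => l * x + (1 - l)) '' K)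
    (n : ℕ)
    (x y z : ℝ)
    (hx : x ∈ K ∩ Set.Ioo (0 : ℝ) 1) (hy : y ∈ K ∩ Set.Ioo (0 : ℝ) 1)
    (hz : z ∈ K ∩ Set.Ioo (0 : ℝ) 1)
    (hfermat : x ^ n + y ^ n = z ^ n)
    (α : ℝ) (hα : α = max x y / min x y - 1) :
    0 ≤ α ∧
    ∃ k : ℤ, l ^ (k * (n : ℤ)) * (1 - l) ^ (n : ℤ) ≤ 1 + (1 + α) ^ n ∧
      1 + (1 + α) ^ n ≤ l ^ (k * (n : ℤ)) * (1 - l) ^ (-(n : ℤ)) := by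
  have hl1 : l < 1 := by linarith
  have hK01 := subset_Icc_of_subset_image_union hl0.le hl1 hKc hK.subset
  have hm0 : 0 < min x y := lt_min hx.2.1 hy.2.1
  have hmK : min x y ∈ K := min_rec' (· ∈ K) hx.1 hy.1
  have hα0 : 0 ≤ α := by
    rw [hα, sub_nonneg, one_le_div hm0]
    exact min_le_max
  have hkey : 1 + (1 + α) ^ n = (z / min x y) ^ n := by
    rw [hα, add_sub_cancel]
    exact one_add_div_pow_eq_div_pow hm0.ne' ((min_pow_add_max_pow n).trans hfermat)
  obtain ⟨i, s, hs, hms⟩ := exists_eq_pow_mul_of_mem hl0 hl1 hK01 hK.subset hmK hm0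
  obtain ⟨j, t, ht, hzt⟩ := exists_eq_pow_mul_of_mem hl0 hl1 hK01 hK.subset hz.1 hz.2.1
  have hc : 0 < 1 - l := by linarith
  refine ⟨hα0, (j : ℤ) - i, ?_⟩
  rw [hkey]
  exact pow_mem_Icc_zpow_mul hl0 hc (div_mem_Icc_of_eq_pow_mul hl0 hc hs ht hms hzt) n

/-- Necessary condition for solutions of the Fermat equation on the attractor of
`{λx, λx + (1-λ)}` with `1/3 ≤ λ < (3-√5)/2`. -/
theorem fermat_equation_solutions_on_self_similar_set
    (l : ℝ) (hl0 : 0 < l) (hl : l < 1 / 2)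
    (hl1 : 1 / 3 ≤ l) (hl2 : l < (3 - Real.sqrt 5) / 2)
    (K : Set ℝ) (hKne : K.Nonempty) (hKc : IsCompact K)
    (hK : K = (fun x => l * x) '' K ∪ (fun x => l * x + (1 - l)) '' K)
    (n : ℕ) (hn : 2 ≤ n)
    (x y z : ℝ)
    (hx : x ∈ K ∩ Set.Ioo (0 : ℝ) 1) (hy : y ∈ K ∩ Set.Ioo (0 : ℝ) 1)
    (hz : z ∈ K ∩ Set.Ioo (0 : ℝ) 1)
    (hfermat : x ^ n + y ^ n = z ^ n)
    (α : ℝ) (hα : α = max x y / min x y - 1) :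
    0 ≤ α ∧
    ∃ k : ℤ, l ^ (k * (n : ℤ)) * (1 - l) ^ (n : ℤ) ≤ 1 + (1 + α) ^ n ∧
      1 + (1 + α) ^ n ≤ l ^ (k * (n : ℤ)) * (1 - l) ^ (-(n : ℤ)) :=
  fermat_equation_solutions_on_self_similar_set_general l hl0 hl K hKc hK n x y z hx hy hz hfermat α
    hα
end

section
/- Let λ be a real number with 1/3 ≤ λ < (3 − √5)/2, let K be the attractor of the IFS {x ↦ λx, x ↦ λx + (1−λ)}, and let n ≥ 2 be an integer. Then the Fermat equation has infinitely many solutions on K: the set {(x, y, z) ∈ ℝ³ : x, y, z ∈ K ∩ (0,1) and x^n + y^n = z^n} is infinite. -/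
/-!
If `1/3 ≤ λ < 1/2`, the difference set `K - ρK` contains the whole interval `[-ρ, 1]` for every
`ρ ∈ [1 - λ, 1]`: the four maps `t ↦ λt + (a - ρb)`, `a, b ∈ {0, 1 - λ}`, cover `[-ρ, 1]` by
images of itself, while they map `K - ρK` into itself. Taking `ρ = 2^(-1/n)` and prescribing the
first digit of both points gives `x, z ∈ K ∩ (0,1)` with `x = ρz`, i.e. `xⁿ + xⁿ = zⁿ`, and the
solutions `(λᵏx, λᵏx, λᵏz)` are pairwise distinct.
-/

open Set Filter Topology

theorem subset_of_forall_mem_image_contraction {X : Type*} [PseudoMetricSpace X] {J D : Set X}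
    {c : NNReal} (hc : c < 1) (hD : IsClosed D) (hDne : D.Nonempty) (hJ : Bornology.IsBounded J)
    (hcover : ∀ t ∈ J, ∃ s ∈ J, ∃ g : X → X, LipschitzWith c g ∧ MapsTo g D D ∧ g s = t) :
    J ⊆ D := by
  obtain ⟨d₀, hd₀⟩ := hDne
  obtain ⟨r, hr⟩ := hJ.subset_closedBall d₀
  have approx : ∀ k : ℕ, ∀ t ∈ J, ∃ d ∈ D, dist t d ≤ c ^ k * r := by
    intro k
    induction k with
    | zero => exact fun t ht => ⟨d₀, hd₀, by simpa using hr ht⟩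
    | succ k ih =>
      intro t ht
      obtain ⟨s, hs, g, hg, hgD, rfl⟩ := hcover t ht
      obtain ⟨d, hd, hsd⟩ := ih s hs
      refine ⟨g d, hgD hd, ?_⟩
      calc dist (g s) (g d) ≤ c * dist s d := hg.dist_le_mul s d
        _ ≤ c * (c ^ k * r) := by gcongr
        _ = c ^ (k + 1) * r := by ring
  have hlim : Tendsto (fun k : ℕ => (c : ℝ) ^ k * r) atTop (𝓝 0) := by
    simpa using (tendsto_pow_atTop_nhds_zero_of_lt_one c.2 (by exact_mod_cast hc)).mul_const r
  intro t ht
  rw [← hD.closure_eq, Metric.mem_closure_iff]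
  intro ε hε
  obtain ⟨k, hk⟩ := (hlim.eventually (gt_mem_nhds hε)).exists
  obtain ⟨d, hd, htd⟩ := approx k t ht
  exact ⟨d, hd, htd.trans_lt hk⟩

theorem lipschitzWith_mul_add {l : ℝ} (hl : 0 ≤ l) (b : ℝ) :
    LipschitzWith l.toNNReal fun x => l * x + b :=
  LipschitzWith.of_dist_le_mul fun x y => by
    simp [Real.dist_eq, ← mul_sub, abs_mul, abs_of_nonneg hl, Real.coe_toNNReal _ hl]

theorem mul_add_mem_of_eq_image_union {l : ℝ} {K : Set ℝ}
    (hK : K = (fun x => l * x) '' K ∪ (fun x => l * x + (1 - l)) '' K) {a : ℝ}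
    (ha : a ∈ ({0, 1 - l} : Set ℝ)) {x : ℝ} (hx : x ∈ K) : l * x + a ∈ K := by
  rw [hK]
  rcases ha with rfl | rfl
  · exact Or.inl ⟨x, hx, (add_zero _).symm⟩
  · exact Or.inr ⟨x, hx, rfl⟩

theorem subset_Icc_of_eq_image_union {l : ℝ} (hl0 : 0 ≤ l) (hl1 : l < 1) {K : Set ℝ}
    (hKb : Bornology.IsBounded K)
    (hK : K = (fun x => l * x) '' K ∪ (fun x => l * x + (1 - l)) '' K) :
    K ⊆ Icc 0 1 := by
  refine subset_of_forall_mem_image_contraction (Real.toNNReal_lt_one.2 hl1) isClosed_Icc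
    (nonempty_Icc.2 zero_le_one) hKb fun t ht => ?_
  have hmaps : ∀ a ∈ ({0, 1 - l} : Set ℝ), MapsTo (fun x => l * x + a) (Icc 0 1) (Icc 0 1) := by
    rintro a (rfl | rfl) x ⟨hx0, hx1⟩ <;> constructor <;> nlinarith
  rw [hK] at ht
  rcases ht with ⟨s, hs, rfl⟩ | ⟨s, hs, rfl⟩
  · exact ⟨s, hs, _, lipschitzWith_mul_add hl0 0, hmaps 0 (by simp), add_zero _⟩
  · exact ⟨s, hs, _, lipschitzWith_mul_add hl0 (1 - l), hmaps (1 - l) (by simp), rfl⟩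

theorem exists_digits_sub_mem_Icc {l ρ t : ℝ} (h₁ : ρ * (1 - 2 * l) ≤ l) (h₂ : 1 - 2 * l ≤ ρ)
    (ht : t ∈ Icc (-ρ) 1) :
    ∃ a ∈ ({0, 1 - l} : Set ℝ), ∃ b ∈ ({0, 1 - l} : Set ℝ), t - (a - ρ * b) ∈ Icc (-(l * ρ)) l := by
  obtain ⟨ht₀, ht₁⟩ := ht
  rcases le_or_gt t (l - (1 - l) * ρ) with hA | hA
  · exact ⟨0, by simp, 1 - l, by simp, by constructor <;> linarith⟩
  rcases le_or_gt t l with hB | hB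
  · exact ⟨0, by simp, 0, by simp, by constructor <;> linarith⟩
  rcases le_or_gt t (1 - (1 - l) * ρ) with hC | hC
  · exact ⟨1 - l, by simp, 1 - l, by simp, by constructor <;> linarith⟩
  · exact ⟨1 - l, by simp, 0, by simp, by constructor <;> linarith⟩

theorem Icc_subset_image_sub_mul_of_eq_image_union {l ρ : ℝ} (hl0 : 0 < l) (hl1 : l < 1)
    (h₁ : ρ * (1 - 2 * l) ≤ l) (h₂ : 1 - 2 * l ≤ ρ) {K : Set ℝ} (hKne : K.Nonempty)
    (hKc : IsCompact K) (hK : K = (fun x => l * x) '' K ∪ (fun x => l * x + (1 - l)) '' K) :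
    Icc (-ρ) 1 ⊆ (fun p : ℝ × ℝ => p.1 - ρ * p.2) '' (K ×ˢ K) := by
  let f : ℝ × ℝ → ℝ := fun p => p.1 - ρ * p.2
  refine subset_of_forall_mem_image_contraction (Real.toNNReal_lt_one.2 hl1)
    ((hKc.prod hKc).image (f := f) (by fun_prop)).isClosed ((hKne.prod hKne).image f)
    (Metric.isBounded_Icc _ _) fun t ht => ?_
  obtain ⟨a, ha, b, hb, hab⟩ := exists_digits_sub_mem_Icc h₁ h₂ ht
  refine ⟨(t - (a - ρ * b)) / l, ⟨?_, ?_⟩, _, lipschitzWith_mul_add hl0.le (a - ρ * b), ?_, ?_⟩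
  · rw [le_div_iff₀ hl0]; linarith [hab.1]
  · rw [div_le_iff₀ hl0]; linarith [hab.2]
  · rintro _ ⟨⟨x, z⟩, ⟨hx, hz⟩, rfl⟩
    exact ⟨(l * x + a, l * z + b), ⟨mul_add_mem_of_eq_image_union hK ha hx,
      mul_add_mem_of_eq_image_union hK hb hz⟩, by ring⟩
  · field_simp
    ring

theorem exists_mem_eq_mul_of_eq_image_union {l ρ : ℝ} (hl₃ : 1 / 3 ≤ l) (hl1 : l < 1)
    (hρ₀ : 1 - l ≤ ρ) (hρ₁ : ρ ≤ 1) {K : Set ℝ} (hKne : K.Nonempty) (hKc : IsCompact K)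
    (hK : K = (fun x => l * x) '' K ∪ (fun x => l * x + (1 - l)) '' K) :
    ∃ x ∈ K, ∃ z ∈ K, 0 < x ∧ 0 < z ∧ x = ρ * z := by
  have hl : 0 < l := by linarith
  have hK01 := subset_Icc_of_eq_image_union hl.le hl1 hKc.isBounded hK
  -- Both points get first digit `1 - λ`; the tails must then differ by this `t`.
  set t := (1 - l) * (ρ - 1) / l
  have ht : t ∈ Icc (-ρ) 1 := by
    constructor
    · rw [le_div_iff₀ hl]; nlinarith
    · rw [div_le_iff₀ hl]; nlinarith
  obtain ⟨⟨x, z⟩, ⟨hx, hz⟩, hxz⟩ := Icc_subset_image_sub_mul_of_eq_image_union hl hl1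
    (by nlinarith) (by linarith) hKne hKc hK ht
  have hx0 := (hK01 hx).1
  have hz0 := (hK01 hz).1
  refine ⟨l * x + (1 - l), mul_add_mem_of_eq_image_union hK (by simp) hx,
    l * z + (1 - l), mul_add_mem_of_eq_image_union hK (by simp) hz, by nlinarith, by nlinarith, ?_⟩
  have hdiff : l * (x - ρ * z) = (1 - l) * (ρ - 1) := by
    rw [show x - ρ * z = t from hxz]
    simp only [t]
    field_simp
  linarith

theorem pow_mul_mem_inter_Ioo_of_eq_image_union {l : ℝ} (hl0 : 0 < l) (hl1 : l < 1) {K : Set ℝ}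
    (hKb : Bornology.IsBounded K)
    (hK : K = (fun x => l * x) '' K ∪ (fun x => l * x + (1 - l)) '' K) {y : ℝ} (hy : y ∈ K)
    (hy0 : 0 < y) (k : ℕ) : l ^ (k + 1) * y ∈ K ∩ Ioo 0 1 := by
  have hmem : ∀ j : ℕ, l ^ j * y ∈ K := by
    intro j
    induction j with
    | zero => simpa using hy
    | succ j ih =>
      simpa [pow_succ', mul_assoc] using mul_add_mem_of_eq_image_union hK (a := 0) (by simp) ih
  have hy1 := (subset_Icc_of_eq_image_union hl0.le hl1 hKb hK hy).2
  have hpow : l ^ (k + 1) < 1 := pow_lt_one₀ hl0.le hl1 (by omega)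
  exact ⟨hmem _, by positivity, by nlinarith [pow_pos hl0 (k + 1)]⟩

theorem exists_pow_eq_half {n : ℕ} (hn : 2 ≤ n) : ∃ ρ : ℝ, 2 / 3 ≤ ρ ∧ ρ ≤ 1 ∧ ρ ^ n = 1 / 2 := by
  set ρ : ℝ := (1 / 2) ^ ((n : ℝ)⁻¹)
  have hρn : ρ ^ n = 1 / 2 := Real.rpow_inv_natCast_pow (by norm_num) (by omega)
  refine ⟨ρ, ?_, Real.rpow_le_one (by norm_num) (by norm_num) (by positivity), hρn⟩
  by_contra! h
  have hlt : ρ ^ n < (2 / 3) ^ n := pow_lt_pow_left₀ h (by positivity) (by omega)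
  have hle : (2 / 3 : ℝ) ^ n ≤ (2 / 3) ^ 2 := pow_le_pow_of_le_one (by norm_num) (by norm_num) hn
  norm_num at hlt hle
  linarith

theorem fermat_equation_infinitely_many_solutions_on_self_similar_set_general
    (l : ℝ) (hl : l < 1 / 2)
    (hl1 : 1 / 3 ≤ l)
    (K : Set ℝ) (hKne : K.Nonempty) (hKc : IsCompact K)
    (hK : K = (fun x => l * x) '' K ∪ (fun x => l * x + (1 - l)) '' K)
    (n : ℕ) (hn : 2 ≤ n) :
    {p : ℝ × ℝ × ℝ | p.1 ∈ K ∩ Set.Ioo (0 : ℝ) 1 ∧ p.2.1 ∈ K ∩ Set.Ioo (0 : ℝ) 1 ∧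
      p.2.2 ∈ K ∩ Set.Ioo (0 : ℝ) 1 ∧ p.1 ^ n + p.2.1 ^ n = p.2.2 ^ n}.Infinite := by
  have hl0 : 0 < l := by linarith
  have hl_lt_one : l < 1 := by linarith
  obtain ⟨ρ, hρ₀, hρ₁, hρn⟩ := exists_pow_eq_half hn
  obtain ⟨x, hx, z, hz, hx0, hz0, hxz⟩ :=
    exists_mem_eq_mul_of_eq_image_union hl1 hl_lt_one (by linarith) hρ₁ hKne hKc hK
  have hfermat : x ^ n + x ^ n = z ^ n := by
    rw [hxz, mul_pow, hρn]
    ring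
  have hmem : ∀ y ∈ K, 0 < y → ∀ k : ℕ, l ^ (k + 1) * y ∈ K ∩ Ioo 0 1 := fun _ =>
    pow_mul_mem_inter_Ioo_of_eq_image_union hl0 hl_lt_one hKc.isBounded hK
  refine infinite_of_injective_forall_mem
    (f := fun k : ℕ => (l ^ (k + 1) * x, l ^ (k + 1) * x, l ^ (k + 1) * z)) ?_ fun k => ?_
  · intro j k hjk
    have hpow := mul_right_cancel₀ hz0.ne' (congrArg (fun p => p.2.2) hjk)
    simpa using pow_right_injective₀ hl0 hl_lt_one.ne hpow
  · refine ⟨hmem x hx hx0 k, hmem x hx hx0 k, hmem z hz hz0 k, ?_⟩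
    simp only [mul_pow, ← mul_add, hfermat]

/-- The Fermat equation has infinitely many solutions on the attractor of
`{λx, λx + (1-λ)}` with `1/3 ≤ λ < (3-√5)/2`. -/
theorem fermat_equation_infinitely_many_solutions_on_self_similar_set
    (l : ℝ) (hl0 : 0 < l) (hl : l < 1 / 2)
    (hl1 : 1 / 3 ≤ l) (hl2 : l < (3 - Real.sqrt 5) / 2)
    (K : Set ℝ) (hKne : K.Nonempty) (hKc : IsCompact K)
    (hK : K = (fun x => l * x) '' K ∪ (fun x => l * x + (1 - l)) '' K)
    (n : ℕ) (hn : 2 ≤ n) :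
    {p : ℝ × ℝ × ℝ | p.1 ∈ K ∩ Set.Ioo (0 : ℝ) 1 ∧ p.2.1 ∈ K ∩ Set.Ioo (0 : ℝ) 1 ∧
      p.2.2 ∈ K ∩ Set.Ioo (0 : ℝ) 1 ∧ p.1 ^ n + p.2.1 ^ n = p.2.2 ^ n}.Infinite :=
  fermat_equation_infinitely_many_solutions_on_self_similar_set_general l hl hl1 K hKne hKc hK n hn
end

section
/- Let λ be a real number with 1/3 ≤ λ < (3 − √5)/2 and let K be the attractor of the IFS {x ↦ λx, x ↦ λx + (1−λ)}. For a real a, write a·K = {a·x : x ∈ K, x ≠ 0}. Then e·K ∩ π·K ≠ ∅, e·K ∩ 1·K ≠ ∅, π·K ∩ 1·K ≠ ∅, and √2·K ∩ 1·K ≠ ∅, where e is Euler's number and π is the circle constant. -/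
/-!
Write `K - t • K` for the set of differences `y - t * x` with `x, y ∈ K`. Since `K` is invariant
under `x ↦ λx` and `x ↦ λx + (1 - λ)`, this set is invariant under the four contractions
`E ↦ λE + c` with `c ∈ {0, 1 - λ, -t(1 - λ), (1 - t)(1 - λ)}`. When `1 - 2λ ≤ λt` and
`t(1 - 2λ) ≤ 1` these four maps cover `[-t, 1]` by images of itself, and a contraction argument
gives `[-t, 1] ⊆ K - t • K`. Writing `y = λy' + (1 - λ)` and `x = λx' + c` turns `y = t x` into a
condition on `y' - t x'` in that interval, which holds for `t = π/e, e, πλ, √2` once `λ ≥ 1/3`.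
-/

open Set Metric Pointwise

theorem subset_of_subset_iUnion_image_of_contracting {X ι : Type*} [PseudoMetricSpace X]
    {f : ι → X → X} {r : ℝ} {S I : Set X} (hr0 : 0 ≤ r) (hr : r < 1)
    (hf : ∀ i x y, dist (f i x) (f i y) ≤ r * dist x y) (hS : IsClosed S) (hSne : S.Nonempty)
    (hSf : ∀ i, MapsTo (f i) S S) (hI : Bornology.IsBounded I) (hIf : I ⊆ ⋃ i, f i '' I) :
    I ⊆ S := by
  obtain ⟨s₀, hs₀⟩ := hSne
  obtain ⟨B, hB⟩ := hI.subset_closedBall s₀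
  have approx : ∀ n : ℕ, ∀ x ∈ I, ∃ s ∈ S, dist x s ≤ r ^ n * B := by
    intro n
    induction n with
    | zero => exact fun x hx => ⟨s₀, hs₀, by simpa using hB hx⟩
    | succ n ih =>
      intro x hx
      obtain ⟨i, x', hx', rfl⟩ : ∃ i, ∃ x' ∈ I, f i x' = x := by simpa using hIf hx
      obtain ⟨s, hs, hxs⟩ := ih x' hx'
      refine ⟨f i s, hSf i hs, ?_⟩
      calc dist (f i x') (f i s) ≤ r * dist x' s := hf i x' s
        _ ≤ r * (r ^ n * B) := by gcongr
        _ = r ^ (n + 1) * B := by ring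
  intro x hx
  rw [← hS.closure_eq, Metric.mem_closure_iff]
  intro ε hε
  have hlim := (tendsto_pow_atTop_nhds_zero_of_lt_one hr0 hr).mul_const B
  rw [zero_mul] at hlim
  obtain ⟨n, hn⟩ := (hlim.eventually (gt_mem_nhds hε)).exists
  obtain ⟨s, hs, hxs⟩ := approx n x hx
  exact ⟨s, hs, hxs.trans_lt hn⟩

section SelfSimilar

variable {l t : ℝ} {K : Set ℝ}

theorem mul_mem_of_eq_union
    (hK : K = (fun x => l * x) '' K ∪ (fun x => l * x + (1 - l)) '' K) {x : ℝ} (hx : x ∈ K) :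
    l * x ∈ K := by
  rw [hK]; exact Or.inl ⟨x, hx, rfl⟩

theorem mul_add_mem_of_eq_union
    (hK : K = (fun x => l * x) '' K ∪ (fun x => l * x + (1 - l)) '' K) {x : ℝ} (hx : x ∈ K) :
    l * x + (1 - l) ∈ K := by
  rw [hK]; exact Or.inr ⟨x, hx, rfl⟩

theorem mul_add_cond_mem_of_eq_union
    (hK : K = (fun x => l * x) '' K ∪ (fun x => l * x + (1 - l)) '' K) (b : Bool) {x : ℝ}
    (hx : x ∈ K) : l * x + cond b (1 - l) 0 ∈ K := by
  cases b
  · simpa using mul_mem_of_eq_union hK hx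
  · exact mul_add_mem_of_eq_union hK hx

/-- The minimum `m` of `K` is `λx` or `λx + (1 - λ)` with `x ≥ m`, forcing `m ≥ 0` resp. `m ≥ 1`. -/
theorem nonneg_of_mem_of_eq_union (hl0 : 0 ≤ l) (hl1 : l < 1) (hKne : K.Nonempty)
    (hKc : IsCompact K)
    (hK : K = (fun x => l * x) '' K ∪ (fun x => l * x + (1 - l)) '' K) {x : ℝ} (hx : x ∈ K) :
    0 ≤ x := by
  obtain ⟨m, hm, hmin⟩ := hKc.exists_isMinOn hKne continuousOn_id
  suffices 0 ≤ m from this.trans (hmin hx)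
  rw [hK] at hm
  rcases hm with ⟨y, hy, rfl⟩ | ⟨y, hy, rfl⟩
  · nlinarith [show l * y ≤ y from hmin hy]
  · nlinarith [show l * y + (1 - l) ≤ y from hmin hy]

theorem Icc_subset_iUnion_image (hl0 : 0 < l) (hA : 1 - 2 * l ≤ l * t)
    (hB : t * (1 - 2 * l) ≤ 1) :
    Icc (-t) 1 ⊆ ⋃ p : Bool × Bool,
      (fun E => l * E + (cond p.2 (1 - l) 0 - t * cond p.1 (1 - l) 0)) '' Icc (-t) 1 := by
  rintro E ⟨hE₁, hE₂⟩
  suffices ∃ a b : Bool, (E - (cond b (1 - l) 0 - t * cond a (1 - l) 0)) / l ∈ Icc (-t) 1 by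
    obtain ⟨a, b, hE'⟩ := this
    exact mem_iUnion.2 ⟨(a, b), _, hE', by field_simp; ring⟩
  simp only [mem_Icc, le_div_iff₀ hl0, div_le_iff₀ hl0]
  rcases lt_or_ge l E with h₁ | h₁
  · exact ⟨false, true, by simp only [cond]; constructor <;> linarith⟩
  rcases le_or_gt (-(l * t)) E with h₂ | h₂
  · exact ⟨false, false, by simp only [cond]; constructor <;> linarith⟩
  rcases le_or_gt (E + t * (1 - l)) l with h₃ | h₃
  · exact ⟨true, false, by simp only [cond]; constructor <;> linarith⟩
  · exact ⟨true, true, by simp only [cond]; constructor <;> linarith⟩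

theorem Icc_subset_sub_smul (hl0 : 0 < l) (hl1 : l < 1) (hKne : K.Nonempty) (hKc : IsCompact K)
    (hK : K = (fun x => l * x) '' K ∪ (fun x => l * x + (1 - l)) '' K)
    (hA : 1 - 2 * l ≤ l * t) (hB : t * (1 - 2 * l) ≤ 1) :
    Icc (-t) 1 ⊆ K - t • K := by
  have hS : IsCompact (K - t • K) := by
    rw [sub_eq_add_neg]
    exact hKc.add (hKc.smul t).neg
  refine subset_of_subset_iUnion_image_of_contracting hl0.le hl1 (fun p E E' => ?_)
    hS.isClosed (hKne.sub hKne.smul_set) (fun p => ?_) (isBounded_Icc _ _)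
    (Icc_subset_iUnion_image hl0 hA hB)
  · simp only [Real.dist_eq, add_sub_add_right_eq_sub, ← mul_sub, abs_mul, abs_of_pos hl0, le_refl]
  · rintro _ ⟨y, hy, _, ⟨x, hx, rfl⟩, rfl⟩
    refine ⟨_, mul_add_cond_mem_of_eq_union hK p.2 hy, _,
      ⟨_, mul_add_cond_mem_of_eq_union hK p.1 hx, rfl⟩, ?_⟩
    simp only [smul_eq_mul]
    ring

theorem exists_ne_zero_mul_eq (hl0 : 0 < l) (hl1 : l < 1) (hKne : K.Nonempty)
    (hKc : IsCompact K)
    (hK : K = (fun x => l * x) '' K ∪ (fun x => l * x + (1 - l)) '' K)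
    (hA : 1 - 2 * l ≤ l * t) (hB : t * (1 - 2 * l) ≤ 1)
    (hstart : (1 - l ≤ t ∧ t * (1 - l) ≤ 1) ∨ 1 - l ≤ l * t) :
    ∃ x ∈ K, ∃ y ∈ K, x ≠ 0 ∧ y ≠ 0 ∧ y = t * x := by
  -- `y = λy' + (1 - λ)` and `x = λx' + c` satisfy `y = t x` iff `y' - t x' = (tc - (1 - λ))/λ`.
  obtain ⟨c, hc, hE⟩ : ∃ c : ℝ, (c = 0 ∨ c = 1 - l) ∧ (t * c - (1 - l)) / l ∈ Icc (-t) 1 := by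
    rcases hstart with ⟨h₁, h₂⟩ | h
    · refine ⟨1 - l, Or.inr rfl, ?_⟩
      rw [mem_Icc, le_div_iff₀ hl0, div_le_iff₀ hl0]
      constructor <;> nlinarith
    · refine ⟨0, Or.inl rfl, ?_⟩
      rw [mem_Icc, le_div_iff₀ hl0, div_le_iff₀ hl0]
      constructor <;> nlinarith
  obtain ⟨y', hy', _, ⟨x', hx', rfl⟩, hxy⟩ := Icc_subset_sub_smul hl0 hl1 hKne hKc hK hA hB hE
  have hx : l * x' + c ∈ K := by
    rcases hc with rfl | rfl
    · simpa using mul_mem_of_eq_union hK hx'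
    · exact mul_add_mem_of_eq_union hK hx'
  have hy0 : l * y' + (1 - l) ≠ 0 := by
    nlinarith [nonneg_of_mem_of_eq_union hl0.le hl1 hKne hKc hK hy']
  have hyx : l * y' + (1 - l) = t * (l * x' + c) := by
    rw [eq_div_iff hl0.ne'] at hxy
    simp only [smul_eq_mul] at hxy
    linear_combination hxy
  exact ⟨_, hx, _, mul_add_mem_of_eq_union hK hy', right_ne_zero_of_mul (hyx ▸ hy0), hy0, hyx⟩

theorem exists_ne_zero_mul_eq_of_one_le (hl1 : 1 / 3 ≤ l) (hl : l < 1) (hKne : K.Nonempty)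
    (hKc : IsCompact K)
    (hK : K = (fun x => l * x) '' K ∪ (fun x => l * x + (1 - l)) '' K)
    (ht1 : 1 ≤ t) (ht : t * (1 - l) ≤ 1) :
    ∃ x ∈ K, ∃ y ∈ K, x ≠ 0 ∧ y ≠ 0 ∧ y = t * x :=
  exists_ne_zero_mul_eq (by linarith) hl hKne hKc hK (by nlinarith) (by nlinarith)
    (Or.inl ⟨by linarith, ht⟩)

theorem exists_ne_zero_mul_eq_of_two_le (hl1 : 1 / 3 ≤ l) (hl : l < 1) (hKne : K.Nonempty)
    (hKc : IsCompact K)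
    (hK : K = (fun x => l * x) '' K ∪ (fun x => l * x + (1 - l)) '' K)
    (ht2 : 2 ≤ t) (ht3 : t ≤ 3) :
    ∃ x ∈ K, ∃ y ∈ K, x ≠ 0 ∧ y ≠ 0 ∧ y = t * x :=
  exists_ne_zero_mul_eq (by linarith) hl hKne hKc hK (by nlinarith) (by nlinarith)
    (Or.inr (by nlinarith))

theorem inter_nonempty_of_mul_eq {a b x y : ℝ} (hx : x ∈ K) (hy : y ∈ K) (hx0 : x ≠ 0)
    (hy0 : y ≠ 0) (h : a * x = b * y) :
    ({w : ℝ | ∃ x ∈ K, x ≠ 0 ∧ w = a * x} ∩ {w : ℝ | ∃ x ∈ K, x ≠ 0 ∧ w = b * x}).Nonempty :=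
  ⟨a * x, ⟨x, hx, hx0, rfl⟩, y, hy, hy0, h⟩

end SelfSimilar

theorem scaled_self_similar_sets_intersect_general
    (l : ℝ) (hl : l < 1 / 2)
    (hl1 : 1 / 3 ≤ l)
    (K : Set ℝ) (hKne : K.Nonempty) (hKc : IsCompact K)
    (hK : K = (fun x => l * x) '' K ∪ (fun x => l * x + (1 - l)) '' K) :
    ({w : ℝ | ∃ x ∈ K, x ≠ 0 ∧ w = Real.exp 1 * x} ∩
      {w : ℝ | ∃ x ∈ K, x ≠ 0 ∧ w = Real.pi * x}).Nonempty ∧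
    ({w : ℝ | ∃ x ∈ K, x ≠ 0 ∧ w = Real.exp 1 * x} ∩
      {w : ℝ | ∃ x ∈ K, x ≠ 0 ∧ w = 1 * x}).Nonempty ∧
    ({w : ℝ | ∃ x ∈ K, x ≠ 0 ∧ w = Real.pi * x} ∩
      {w : ℝ | ∃ x ∈ K, x ≠ 0 ∧ w = 1 * x}).Nonempty ∧
    ({w : ℝ | ∃ x ∈ K, x ≠ 0 ∧ w = Real.sqrt 2 * x} ∩
      {w : ℝ | ∃ x ∈ K, x ≠ 0 ∧ w = 1 * x}).Nonempty := by
  have hl' : l < 1 := by linarith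
  have he₁ : 2.7182818283 < Real.exp 1 := Real.exp_one_gt_d9
  have he₂ : Real.exp 1 < 2.7182818286 := Real.exp_one_lt_d9
  have hπ₁ : 3 < Real.pi := Real.pi_gt_three
  have hπ₂ : Real.pi < 3.15 := Real.pi_lt_d2
  have hs₁ : 1 < Real.sqrt 2 := by rw [Real.lt_sqrt zero_le_one]; norm_num
  have hs₂ : Real.sqrt 2 < 1.5 := by rw [Real.sqrt_lt' (by norm_num)]; norm_num
  refine ⟨?_, ?_, ?_, ?_⟩
  · obtain ⟨x, hx, y, hy, hx0, hy0, hxy⟩ := exists_ne_zero_mul_eq_of_one_le hl1 hl' hKne hKc hK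
      (t := Real.pi / Real.exp 1) (by rw [le_div_iff₀ (by linarith)]; linarith)
      (by rw [div_mul_eq_mul_div, div_le_one (by linarith)]; nlinarith)
    exact inter_nonempty_of_mul_eq hy hx hy0 hx0 (by rw [hxy]; field_simp)
  · obtain ⟨x, hx, y, hy, hx0, hy0, hxy⟩ := exists_ne_zero_mul_eq_of_two_le hl1 hl' hKne hKc hK
      (t := Real.exp 1) (by linarith) (by linarith)
    exact inter_nonempty_of_mul_eq hx hy hx0 hy0 (by rw [hxy, one_mul])
  · obtain ⟨x, hx, y, hy, hx0, hy0, hxy⟩ := exists_ne_zero_mul_eq_of_one_le hl1 hl' hKne hKc hK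
      (t := Real.pi * l) (by nlinarith) (by nlinarith [sq_nonneg (2 * l - 1)])
    exact inter_nonempty_of_mul_eq (mul_mem_of_eq_union hK hx) hy
      (mul_ne_zero (by linarith) hx0) hy0 (by rw [hxy]; ring)
  · obtain ⟨x, hx, y, hy, hx0, hy0, hxy⟩ := exists_ne_zero_mul_eq_of_one_le hl1 hl' hKne hKc hK
      (t := Real.sqrt 2) (by linarith) (by nlinarith)
    exact inter_nonempty_of_mul_eq hx hy hx0 hy0 (by rw [hxy, one_mul])

/-- Scaled copies of the attractor `K` of `{λx, λx + (1-λ)}`, `1/3 ≤ λ < (3-√5)/2`,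
by `e`, `π`, `1` and `√2` pairwise intersect as stated. -/
theorem scaled_self_similar_sets_intersect
    (l : ℝ) (hl0 : 0 < l) (hl : l < 1 / 2)
    (hl1 : 1 / 3 ≤ l) (hl2 : l < (3 - Real.sqrt 5) / 2)
    (K : Set ℝ) (hKne : K.Nonempty) (hKc : IsCompact K)
    (hK : K = (fun x => l * x) '' K ∪ (fun x => l * x + (1 - l)) '' K) :
    ({w : ℝ | ∃ x ∈ K, x ≠ 0 ∧ w = Real.exp 1 * x} ∩
      {w : ℝ | ∃ x ∈ K, x ≠ 0 ∧ w = Real.pi * x}).Nonempty ∧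
    ({w : ℝ | ∃ x ∈ K, x ≠ 0 ∧ w = Real.exp 1 * x} ∩
      {w : ℝ | ∃ x ∈ K, x ≠ 0 ∧ w = 1 * x}).Nonempty ∧
    ({w : ℝ | ∃ x ∈ K, x ≠ 0 ∧ w = Real.pi * x} ∩
      {w : ℝ | ∃ x ∈ K, x ≠ 0 ∧ w = 1 * x}).Nonempty ∧
    ({w : ℝ | ∃ x ∈ K, x ≠ 0 ∧ w = Real.sqrt 2 * x} ∩
      {w : ℝ | ∃ x ∈ K, x ≠ 0 ∧ w = 1 * x}).Nonempty :=
  scaled_self_similar_sets_intersect_general l hl hl1 K hKne hKc hK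
end

section
/- Let C be the middle-third Cantor set and let J = [0, 1/9] ∩ C. Then J + C = {x + y : x ∈ J, y ∈ C} = [0, 4/9] ∪ [2/3, 10/9]. -/
open Set Pointwise

/-!
Every `z ∈ [0, 2]` splits as `z = x + y` with `x, y` in the `n`-th pre-Cantor set (choose the
thirds containing `x` and `y` according to whether `z` lies in `[0, 2/3]`, `[2/3, 4/3]` or
`[4/3, 2]`, and recurse), so by compactness `C + C = [0, 2]`. The self-similarity
`C = C/3 ∪ (2 + C)/3` gives `A/3 + C = (A + C)/3 ∪ (2 + A + C)/3` for every `A`. Applied to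
`A = C` this yields `C/3 + C = [0, 4/3]`, and applied once more to `A = C/3`, using
`[0, 1/9] ∩ C = C/9`, it yields the theorem.
-/

theorem iInter_add_iInter_of_antitone {M : Type*} [TopologicalSpace M] [Add M] [ContinuousAdd M]
    [T2Space M] {K L : ℕ → Set M} (hK : Antitone K) (hL : Antitone L)
    (hKc : ∀ n, IsCompact (K n)) (hLc : ∀ n, IsCompact (L n)) :
    (⋂ n, K n) + ⋂ n, L n = ⋂ n, K n + L n := by
  refine Subset.antisymm (subset_iInter fun n ↦ add_subset_add (iInter_subset _ n)
    (iInter_subset _ n)) fun z hz ↦ ?_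
  set S : ℕ → Set (M × M) := fun n ↦ K n ×ˢ L n ∩ (fun p ↦ p.1 + p.2) ⁻¹' {z}
  have hfiber : IsClosed ((fun p : M × M ↦ p.1 + p.2) ⁻¹' {z}) :=
    isClosed_singleton.preimage continuous_add
  have hS_nonempty (n : ℕ) : (S n).Nonempty := by
    obtain ⟨x, hx, y, hy, hxy⟩ := mem_iInter.mp hz n
    exact ⟨(x, y), ⟨hx, hy⟩, hxy⟩
  obtain ⟨⟨x, y⟩, hS⟩ := IsCompact.nonempty_iInter_of_sequence_nonempty_isCompact_isClosed S
    (fun n ↦ inter_subset_inter_left _ (prod_mono (hK n.le_succ) (hL n.le_succ)))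
    hS_nonempty (((hKc 0).prod (hLc 0)).inter_right hfiber)
    (fun n ↦ ((hKc n).prod (hLc n)).isClosed.inter hfiber)
  rw [mem_iInter] at hS
  exact ⟨x, mem_iInter.mpr fun n ↦ (hS n).1.1, y, mem_iInter.mpr fun n ↦ (hS n).1.2, (hS 0).2⟩

section AffineImages

variable {𝕜 : Type*} [Field 𝕜]

theorem image_div_add_image_div (c : 𝕜) (A B : Set 𝕜) :
    (· / c) '' A + (· / c) '' B = (· / c) '' (A + B) := by
  simp only [← image2_add, image_image2, image2_image_left, image2_image_right, add_div]

theorem image_div_add_image_add_div (b c : 𝕜) (A B : Set 𝕜) :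
    (· / c) '' A + (fun x ↦ (b + x) / c) '' B = (fun x ↦ (b + x) / c) '' (A + B) := by
  simp only [← image2_add, image_image2, image2_image_left, image2_image_right]
  exact image2_congr fun _ _ _ _ ↦ by ring

end AffineImages

section OrderedImages

variable {𝕜 : Type*} [Field 𝕜] [LinearOrder 𝕜] [IsStrictOrderedRing 𝕜] {c : 𝕜}

theorem image_div_Icc_of_pos (hc : 0 < c) (p q : 𝕜) :
    (· / c) '' Icc p q = Icc (p / c) (q / c) :=
  (OrderIso.divRight₀ c hc).image_Icc p q

theorem image_add_div_Icc_of_pos (hc : 0 < c) (b p q : 𝕜) :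
    (fun x ↦ (b + x) / c) '' Icc p q = Icc ((b + p) / c) ((b + q) / c) := by
  rw [← image_image (· / c) (b + ·), image_const_add_Icc, image_div_Icc_of_pos hc]

end OrderedImages

theorem isCompact_preCantorSet (n : ℕ) : IsCompact (preCantorSet n) :=
  isCompact_Icc.of_isClosed_subset (isClosed_preCantorSet n) preCantorSet_subset_unitInterval

theorem Icc_subset_preCantorSet_add_preCantorSet (n : ℕ) :
    Icc 0 2 ⊆ preCantorSet n + preCantorSet n := by
  induction n with
  | zero => exact fun z ⟨hz0, hz2⟩ ↦ ⟨z / 2, ⟨by linarith, by linarith⟩,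
      z / 2, ⟨by linarith, by linarith⟩, by ring⟩
  | succ n ih =>
    rintro z ⟨hz0, hz2⟩
    rcases le_or_gt z (2 / 3) with h | h
    · obtain ⟨x, hx, y, hy, hxy⟩ := ih (show 3 * z ∈ Icc 0 2 from ⟨by linarith, by linarith⟩)
      exact ⟨x / 3, Or.inl ⟨x, hx, rfl⟩, y / 3, Or.inl ⟨y, hy, rfl⟩, by linarith⟩
    rcases le_or_gt z (4 / 3) with h' | h'
    · obtain ⟨x, hx, y, hy, hxy⟩ := ih (show 3 * z - 2 ∈ Icc 0 2 from ⟨by linarith, by linarith⟩)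
      exact ⟨x / 3, Or.inl ⟨x, hx, rfl⟩, (2 + y) / 3, Or.inr ⟨y, hy, rfl⟩, by linarith⟩
    · obtain ⟨x, hx, y, hy, hxy⟩ := ih (show 3 * z - 4 ∈ Icc 0 2 from ⟨by linarith, by linarith⟩)
      exact ⟨(2 + x) / 3, Or.inr ⟨x, hx, rfl⟩, (2 + y) / 3, Or.inr ⟨y, hy, rfl⟩, by linarith⟩

theorem preCantorSet_add_preCantorSet (n : ℕ) : preCantorSet n + preCantorSet n = Icc 0 2 := by
  refine Subset.antisymm ?_ (Icc_subset_preCantorSet_add_preCantorSet n)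
  calc preCantorSet n + preCantorSet n ⊆ Icc 0 1 + Icc 0 1 :=
        add_subset_add preCantorSet_subset_unitInterval preCantorSet_subset_unitInterval
    _ = Icc 0 2 := by norm_num [Icc_add_Icc]

theorem cantorSet_add_cantorSet : cantorSet + cantorSet = Icc 0 2 := by
  rw [cantorSet, iInter_add_iInter_of_antitone preCantorSet_antitone preCantorSet_antitone
    isCompact_preCantorSet isCompact_preCantorSet]
  simp only [preCantorSet_add_preCantorSet, iInter_const]

theorem image_div_three_add_cantorSet (A : Set ℝ) :
    (· / 3) '' A + cantorSet =
      (· / 3) '' (A + cantorSet) ∪ (fun x ↦ (2 + x) / 3) '' (A + cantorSet) := by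
  nth_rewrite 1 [cantorSet_eq_union_halves]
  rw [add_union, image_div_add_image_div, image_div_add_image_add_div]

theorem image_div_three_cantorSet_add_cantorSet :
    (· / 3) '' cantorSet + cantorSet = Icc 0 (4 / 3) := by
  rw [image_div_three_add_cantorSet, cantorSet_add_cantorSet, image_div_Icc_of_pos three_pos,
    image_add_div_Icc_of_pos three_pos]
  norm_num

theorem Icc_zero_third_inter_cantorSet : Icc 0 (1 / 3) ∩ cantorSet = (· / 3) '' cantorSet := by
  have hleft : (· / 3) '' cantorSet ⊆ Icc (0 : ℝ) (1 / 3) :=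
    (image_mono cantorSet_subset_unitInterval).trans
      (by rw [image_div_Icc_of_pos three_pos]; norm_num)
  have hright : Disjoint (Icc (0 : ℝ) (1 / 3)) ((fun x ↦ (2 + x) / 3) '' cantorSet) := by
    refine Disjoint.mono_right (image_mono cantorSet_subset_unitInterval) ?_
    rw [image_add_div_Icc_of_pos three_pos]
    exact disjoint_left.mpr fun x hx hy ↦ by linarith [hx.2, hy.1]
  nth_rewrite 1 [cantorSet_eq_union_halves]
  rw [inter_union_distrib_left, inter_eq_right.mpr hleft, hright.inter_eq, union_empty]

theorem Icc_zero_ninth_inter_cantorSet :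
    Icc 0 (1 / 9) ∩ cantorSet = (· / 3) '' ((· / 3) '' cantorSet) :=
  calc Icc 0 (1 / 9) ∩ cantorSet = Icc 0 (1 / 9) ∩ (Icc 0 (1 / 3) ∩ cantorSet) := by
        rw [← inter_assoc, Icc_inter_Icc]; norm_num
    _ = (· / 3) '' Icc 0 (1 / 3) ∩ (· / 3) '' cantorSet := by
        rw [Icc_zero_third_inter_cantorSet, image_div_Icc_of_pos three_pos]; norm_num
    _ = (· / 3) '' ((· / 3) '' cantorSet) := by
        rw [← image_inter (f := (· / (3 : ℝ))) (OrderIso.divRight₀ 3 three_pos).injective,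
          Icc_zero_third_inter_cantorSet]

/-- For `J = [0, 1/9] ∩ C`, where `C` is the middle-third Cantor set,
`J + C = [0, 4/9] ∪ [2/3, 10/9]`. -/
theorem sum_of_cantorSet_piece_and_cantorSet :
    {z : ℝ | ∃ x ∈ Set.Icc (0 : ℝ) (1 / 9) ∩ cantorSet, ∃ y ∈ cantorSet, x + y = z}
      = Set.Icc (0 : ℝ) (4 / 9) ∪ Set.Icc (2 / 3 : ℝ) (10 / 9) := by
  change (Icc 0 (1 / 9) ∩ cantorSet) + cantorSet = _
  rw [Icc_zero_ninth_inter_cantorSet, image_div_three_add_cantorSet,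
    image_div_three_cantorSet_add_cantorSet, image_div_Icc_of_pos three_pos,
    image_add_div_Icc_of_pos three_pos]
  norm_num
end
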